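/- arXiv:1204.3590 — 2 statements merged into one kernel-verified Lean document; each statement's English description precedes it below -/
import Mathlib

section
/- Let (W,S) be a finite Coxeter group and let V be the Q-vector space with basis {a_w : w ∈ W, w² = 1}. Then the assignments R(s)·a_w = −a_w if sw = ws and l(ws) < l(w), and R(s)·a_w = a_{sws} otherwise (for s ∈ S), extend to a well-defined linear representation R of W on V. -/
namespace InvolRepAux

open CoxeterSystem List

set_option linter.unusedSectionVars false

variable {B W : Type*} [Group W] [DecidableEq W] {M : CoxeterMatrix B} (cs : CoxeterSystem M W)

local prefix:100 "s" => cs.simple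
local prefix:100 "π" => cs.wordProd
local prefix:100 "ℓ" => cs.length

theorem alt_add (i j : B) (m k : ℕ) :
    CoxeterSystem.alternatingWord i j (m + k) =
      (if Even k then CoxeterSystem.alternatingWord i j m
        else CoxeterSystem.alternatingWord j i m) ++ CoxeterSystem.alternatingWord i j k := by
  induction m with
  | zero => simp [CoxeterSystem.alternatingWord]
  | succ m ih =>
    have h1 : m + 1 + k = (m + k) + 1 := by omega
    rw [h1, alternatingWord_succ' i j (m + k), ih]
    by_cases hm : Even m <;> by_cases hk : Even k <;>
      simp [alternatingWord_succ', Nat.even_add, hm, hk]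

section Walk

variable (i j : B)

/-- The prefix products of the alternating walk. -/
noncomputable def dd (k : ℕ) : W := π (CoxeterSystem.alternatingWord i j k)

/-- The letters of the alternating walk. -/
def xx (k : ℕ) : B := if Even k then j else i

theorem dd_zero : dd cs i j 0 = 1 := by simp [dd, CoxeterSystem.alternatingWord, wordProd_nil]

theorem dd_succ (k : ℕ) : dd cs i j (k + 1) = s (xx i j k) * dd cs i j k := by
  rw [dd, alternatingWord_succ', wordProd_cons]; rfl

/-- Abbreviation for the "half-turn" element. -/
noncomputable def cc : W := dd cs i j (M i j)

theorem dd_braid : π (CoxeterSystem.alternatingWord j i (M i j)) = cc cs i j := by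
  have := cs.wordProd_braidWord_eq j i
  unfold CoxeterSystem.braidWord at this
  rw [M.symmetric j i] at this
  exact this

theorem dd_add (k : ℕ) : dd cs i j (M i j + k) = cc cs i j * dd cs i j k := by
  rw [dd, alt_add, wordProd_append]
  by_cases hk : Even k
  · rw [if_pos hk]; rfl
  · rw [if_neg hk, dd_braid]; rfl

theorem cc_sq : cc cs i j * cc cs i j = 1 := by
  have h : cc cs i j * cc cs i j = dd cs i j (M i j + M i j) := (dd_add cs i j (M i j)).symm
  rw [h, show M i j + M i j = 2 * M i j by ring, dd, cs.prod_alternatingWord_eq_mul_pow]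
  have : Even (2 * M i j) := ⟨M i j, by ring⟩
  rw [if_pos this, Nat.mul_div_cancel_left _ (by norm_num), one_mul,
    cs.simple_mul_simple_pow i j]

theorem cc_inv : (cc cs i j)⁻¹ = cc cs i j := inv_eq_of_mul_eq_one_right (cc_sq cs i j)

theorem cc_conj (k : ℕ) :
    cc cs i j * s (xx i j k) * cc cs i j = s (xx i j (k + M i j)) := by
  have h1 : dd cs i j (M i j + (k + 1)) = cc cs i j * (s (xx i j k) * dd cs i j k) := by
    rw [dd_add, dd_succ]
  have h2 : dd cs i j (M i j + (k + 1)) = s (xx i j (M i j + k)) * (cc cs i j * dd cs i j k) := by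
    rw [show M i j + (k + 1) = (M i j + k) + 1 by ring, dd_succ, dd_add]
  rw [h2] at h1
  have h3 : cc cs i j * s (xx i j k) = s (xx i j (M i j + k)) * cc cs i j := by
    have := h1
    rw [← mul_assoc, ← mul_assoc] at this
    exact (mul_right_cancel this).symm
  rw [h3, mul_assoc, cc_sq, mul_one, Nat.add_comm]

theorem dd_two_M : dd cs i j (2 * M i j) = 1 := by
  rw [show 2 * M i j = M i j + M i j by ring, dd_add]
  exact cc_sq cs i j

end Walk


section Eta

/-- The underlying function of the signed conjugation permutation. -/
def permFun (b : B) : W × ℤˣ → W × ℤˣ :=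
  fun p => (s b * p.1 * s b, if p.1 = s b then -p.2 else p.2)

theorem permFun_involutive (b : B) : Function.Involutive (permFun cs b) := by
  intro ⟨t, ε⟩
  unfold permFun
  by_cases h : t = s b
  · subst h
    simp [cs.simple_mul_simple_cancel_left, cs.simple_mul_simple_cancel_right]
  · have h2 : ¬ (s b * t * s b = s b) := by
      intro hc
      apply h
      have := congrArg (fun x => s b * x * s b) hc
      simpa [mul_assoc, cs.simple_mul_simple_cancel_left,
        cs.simple_mul_simple_cancel_right] using this
    simp only [if_neg h, if_neg h2]
    simp [mul_assoc, cs.simple_mul_simple_cancel_left, cs.simple_mul_simple_cancel_right]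

/-- The signed conjugation permutation of `W × ℤˣ`. -/
def permE (b : B) : Equiv.Perm (W × ℤˣ) := (permFun_involutive cs b).toPerm

theorem permE_apply (b : B) (t : W) (ε : ℤˣ) :
    permE cs b (t, ε) = (s b * t * s b, if t = s b then -ε else ε) := rfl

theorem ite_neg_eq_mul (c : Prop) [Decidable c] (x : ℤˣ) :
    (if c then -x else x) = x * (if c then -1 else 1) := by
  split <;> simp

theorem conj_eq_conj_iff (g a x : W) : g * a * g = g * x * g ↔ a = x := by
  constructor
  · intro h
    rw [mul_assoc, mul_assoc] at h
    exact mul_right_cancel (mul_left_cancel h)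
  · intro h; rw [h]

theorem perm_walk (i j : B) (p : ℕ) (t : W) (ε : ℤˣ) :
    ((permE cs i * permE cs j) ^ p) (t, ε) =
      (dd cs i j (2 * p) * t * (dd cs i j (2 * p))⁻¹,
        ε * ∏ l ∈ Finset.range (2 * p),
          (if dd cs i j l * t * (dd cs i j l)⁻¹ = s (xx i j l) then (-1 : ℤˣ) else 1)) := by
  induction p with
  | zero => simp [dd_zero]
  | succ p ih =>
    have hx0 : xx i j (2 * p) = j := by simp [xx, even_two_mul]
    have hx1 : xx i j (2 * p + 1) = i := by
      have : ¬ Even (2 * p + 1) := by simp [Nat.even_add_one, even_two_mul]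
      simp [xx, this]
    have key : ((permE cs i * permE cs j) ^ (p + 1)) (t, ε)
        = permE cs i (permE cs j (((permE cs i * permE cs j) ^ p) (t, ε))) := by
      rw [pow_succ', Equiv.Perm.mul_apply, Equiv.Perm.mul_apply]
    rw [key, ih, permE_apply, permE_apply]
    have h2p : 2 * (p + 1) = 2 * p + 1 + 1 := by ring
    rw [h2p, Finset.prod_range_succ, Finset.prod_range_succ]
    have hd1 : dd cs i j (2 * p + 1) * t * (dd cs i j (2 * p + 1))⁻¹
        = s j * (dd cs i j (2 * p) * t * (dd cs i j (2 * p))⁻¹) * s j := by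
      rw [dd_succ, hx0, mul_inv_rev, cs.inv_simple]
      group
    have hd2 : dd cs i j (2 * p + 1 + 1) * t * (dd cs i j (2 * p + 1 + 1))⁻¹
        = s i * (dd cs i j (2 * p + 1) * t * (dd cs i j (2 * p + 1))⁻¹) * s i := by
      rw [dd_succ cs i j (2 * p + 1), hx1, mul_inv_rev, cs.inv_simple]
      group
    refine Prod.ext ?_ ?_
    · show s i * (s j * (dd cs i j (2 * p) * t * (dd cs i j (2 * p))⁻¹) * s j) * s i = _
      rw [hd2, hd1]
    · show (if s j * (dd cs i j (2 * p) * t * (dd cs i j (2 * p))⁻¹) * s j = s i then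
          -(if dd cs i j (2 * p) * t * (dd cs i j (2 * p))⁻¹ = s j then
              -(ε * _) else ε * _)
          else (if dd cs i j (2 * p) * t * (dd cs i j (2 * p))⁻¹ = s j then
              -(ε * _) else ε * _)) = _
      rw [← hd1, hx0, hx1]
      rw [ite_neg_eq_mul, ite_neg_eq_mul]
      ac_rfl

theorem permE_liftable : M.IsLiftable (fun b => permE cs b) := by
  intro i j
  apply Equiv.ext
  rintro ⟨t, ε⟩
  rw [Equiv.Perm.one_apply, perm_walk]
  have hd : dd cs i j (2 * M i j) = 1 := dd_two_M cs i j
  refine Prod.ext ?_ ?_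
  · simp [hd]
  · show ε * _ = ε
    rw [show 2 * M i j = M i j + M i j by ring, Finset.prod_range_add]
    have heq : ∀ l, (if dd cs i j (M i j + l) * t * (dd cs i j (M i j + l))⁻¹
          = s (xx i j (M i j + l)) then (-1 : ℤˣ) else 1)
        = (if dd cs i j l * t * (dd cs i j l)⁻¹ = s (xx i j l) then (-1 : ℤˣ) else 1) := by
      intro l
      have hX : dd cs i j (M i j + l) * t * (dd cs i j (M i j + l))⁻¹
          = cc cs i j * (dd cs i j l * t * (dd cs i j l)⁻¹) * cc cs i j := by
        rw [dd_add, mul_inv_rev, cc_inv]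
        group
      have hS : s (xx i j (M i j + l)) = cc cs i j * s (xx i j l) * cc cs i j := by
        rw [Nat.add_comm]
        exact (cc_conj cs i j l).symm
      have hcond : (dd cs i j (M i j + l) * t * (dd cs i j (M i j + l))⁻¹
          = s (xx i j (M i j + l)))
          ↔ (dd cs i j l * t * (dd cs i j l)⁻¹ = s (xx i j l)) := by
        rw [hX, hS]
        exact conj_eq_conj_iff _ _ _
      simp only [hcond]
    rw [Finset.prod_congr rfl (fun l _ => heq l), ← Finset.prod_mul_distrib]
    have : ∀ l, ((if dd cs i j l * t * (dd cs i j l)⁻¹ = s (xx i j l) then (-1 : ℤˣ) else 1)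
        * (if dd cs i j l * t * (dd cs i j l)⁻¹ = s (xx i j l) then (-1 : ℤˣ) else 1)) = 1 := by
      intro l; split <;> decide
    rw [Finset.prod_congr rfl (fun l _ => this l), Finset.prod_const_one, mul_one]

/-- The sign-cocycle homomorphism. -/
noncomputable def Phi : W →* Equiv.Perm (W × ℤˣ) :=
  cs.lift ⟨fun b => permE cs b, permE_liftable cs⟩

/-- The eta cocycle: `eta cs w t = -1` iff `t` is "inverted" by right multiplication. -/
noncomputable def eta (w t : W) : ℤˣ := ((Phi cs) w (t, 1)).2

theorem Phi_simple (b : B) : Phi cs (s b) = permE cs b :=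
  cs.lift_apply_simple (permE_liftable cs) b

theorem eta_word (ω : List B) (t : W) (ε : ℤˣ) :
    (Phi cs) (π ω) (t, ε)
      = (π ω * t * (π ω)⁻¹, ε * ((-1 : ℤˣ) ^ ((cs.rightInvSeq ω).count t))) := by
  induction ω with
  | nil => simp [cs.wordProd_nil]
  | cons b ω ih =>
    rw [cs.wordProd_cons, map_mul, Equiv.Perm.mul_apply, ih, Phi_simple, permE_apply]
    have hris : cs.rightInvSeq (b :: ω) = ((π ω)⁻¹ * (s b) * π ω) :: cs.rightInvSeq ω := rfl
    have hcond : (π ω * t * (π ω)⁻¹ = s b) ↔ ((π ω)⁻¹ * (s b) * π ω = t) := by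
      constructor
      · intro h; rw [← h]; group
      · intro h; rw [← h]; group
    refine Prod.ext ?_ ?_
    · show s b * (π ω * t * (π ω)⁻¹) * s b = _
      rw [mul_inv_rev, cs.inv_simple]
      group
    · show (if π ω * t * (π ω)⁻¹ = s b then -(ε * _) else ε * _) = _
      rw [hris, List.count_cons, ite_neg_eq_mul, pow_add, ← mul_assoc]
      congr 1
      simp only [hcond]
      split <;> rename_i hh <;> simp [hh]

theorem Phi_apply (w t : W) (ε : ℤˣ) :
    (Phi cs) w (t, ε) = (w * t * w⁻¹, ε * eta cs w t) := by
  obtain ⟨ω, rfl⟩ := cs.wordProd_surjective w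
  rw [eta_word]
  have : eta cs (π ω) t = (-1 : ℤˣ) ^ ((cs.rightInvSeq ω).count t) := by
    unfold eta
    rw [eta_word, one_mul]
  rw [this]

theorem eta_one (t : W) : eta cs 1 t = 1 := by
  unfold eta
  rw [map_one]
  rfl

theorem eta_mul (w₁ w₂ t : W) :
    eta cs (w₁ * w₂) t = eta cs w₁ (w₂ * t * w₂⁻¹) * eta cs w₂ t := by
  have h : (Phi cs) (w₁ * w₂) (t, 1) = (Phi cs) w₁ ((Phi cs) w₂ (t, 1)) := by
    rw [map_mul, Equiv.Perm.mul_apply]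
  rw [Phi_apply, Phi_apply, Phi_apply] at h
  rw [Prod.ext_iff] at h
  have h2 := h.2
  simp only [one_mul] at h2
  exact h2.trans (mul_comm _ _)

theorem eta_simple_self (b : B) : eta cs (s b) (s b) = -1 := by
  unfold eta
  rw [Phi_simple, permE_apply, if_pos rfl]

theorem eta_neg_iff (w : W) (b : B) :
    eta cs w (s b) = -1 ↔ ℓ (w * s b) < ℓ w := by
  constructor
  · intro h
    obtain ⟨ω, hred, rfl⟩ := cs.exists_reduced_word' w
    have he : eta cs (π ω) (s b) = (-1 : ℤˣ) ^ ((cs.rightInvSeq ω).count (s b)) := by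
      unfold eta; rw [eta_word, one_mul]
    rw [he] at h
    have hodd : Odd ((cs.rightInvSeq ω).count (s b)) := by
      rcases Nat.even_or_odd ((cs.rightInvSeq ω).count (s b)) with he' | ho
      · rw [he'.neg_one_pow] at h
        exact absurd h (by decide)
      · exact ho
    have hmem : s b ∈ cs.rightInvSeq ω := by
      have : (cs.rightInvSeq ω).count (s b) ≠ 0 := by
        intro h0; rw [h0] at hodd; exact (Nat.not_odd_iff_even.2 Even.zero) hodd
      exact List.count_pos_iff.mp (Nat.pos_of_ne_zero this)
    exact (cs.isRightInversion_of_mem_rightInvSeq hred hmem).2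
  · intro h
    have hw : w = (w * s b) * s b := by
      rw [mul_assoc, cs.simple_mul_simple_self, mul_one]
    have hcon : s b * s b * (s b)⁻¹ = s b := by
      rw [cs.simple_mul_simple_self, one_mul, cs.inv_simple]
    have h1 : eta cs w (s b) = eta cs (w * s b) (s b) * eta cs (s b) (s b) := by
      conv_lhs => rw [hw]
      rw [eta_mul, hcon]
    have h2 : eta cs (w * s b) (s b) = 1 := by
      rcases Int.units_eq_one_or (eta cs (w * s b) (s b)) with h' | h'
      · exact h'
      · exfalso
        have := (eta_neg_iff (w * s b) b |>.mp h')
        rw [mul_assoc, cs.simple_mul_simple_self, mul_one] at this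
        omega
    rw [h1, h2, eta_simple_self, one_mul]

end Eta

theorem etaA (c u r r' : W) (hc : c * c = 1) (hu : u * u = 1)
    (hcom : u * r = r * u) (hr' : r' = c * r * c) :
    eta cs (c * u * c) r' = eta cs u r := by
  have hci : c⁻¹ = c := inv_eq_of_mul_eq_one_right hc
  have hui : u⁻¹ = u := inv_eq_of_mul_eq_one_right hu
  have hcr'c : c * r' * c⁻¹ = r := by
    rw [hr', hci, ← mul_assoc, ← mul_assoc, hc, one_mul, mul_assoc, hc, mul_one]
  have h1 : eta cs (c * u * c) r' = eta cs (c * u) (c * r' * c⁻¹) * eta cs c r' :=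
    eta_mul cs (c * u) c r'
  have h2 : eta cs (c * u) r = eta cs c (u * r * u⁻¹) * eta cs u r := eta_mul cs c u r
  have hur : u * r * u⁻¹ = r := by rw [hui, hcom, mul_assoc, hu, mul_one]
  have h3 : (1 : ℤˣ) = eta cs c r * eta cs c r' := by
    have h := eta_mul cs c c r'
    rw [hc, eta_one, hcr'c] at h
    exact h
  rw [h1, hcr'c, h2, hur]
  calc eta cs c r * eta cs u r * eta cs c r'
      = (eta cs c r * eta cs c r') * eta cs u r := by ac_rfl
    _ = eta cs u r := by rw [← h3, one_mul]

section Main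

/-- Conjugation of an involution by a simple reflection. -/
def sigma (b : B) (t : {w : W // w * w = 1}) : {w : W // w * w = 1} :=
  ⟨s b * (t : W) * s b, by
    have h1 : s b * (t : W) * s b * (s b * (t : W) * s b)
        = s b * ((t : W) * (s b * s b) * (t : W)) * s b := by group
    rw [h1, cs.simple_mul_simple_self, mul_one, t.2, mul_one, cs.simple_mul_simple_self]⟩

/-- The sign in the involution representation. -/
noncomputable def epsQ (b : B) (t : {w : W // w * w = 1}) : ℚ :=
  if s b * (t : W) = (t : W) * s b ∧ ℓ ((t : W) * s b) < ℓ (t : W) then -1 else 1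

/-- The operator of the involution representation attached to a simple reflection. -/
noncomputable def fEnd (b : B) : Module.End ℚ ({w : W // w * w = 1} →₀ ℚ) :=
  Finsupp.lsum ℚ (fun t => epsQ cs b t • (Finsupp.lsingle (sigma cs b t) : ℚ →ₗ[ℚ] _))

theorem fEnd_single (b : B) (t : {w : W // w * w = 1}) :
    fEnd cs b (Finsupp.single t 1) = epsQ cs b t • Finsupp.single (sigma cs b t) 1 := by
  unfold fEnd
  rw [Finsupp.lsum_single]
  simp

/-- Conjugation of an involution by a prefix of the alternating walk. -/
noncomputable def tau (i j : B) (k : ℕ) (t : {w : W // w * w = 1}) : {w : W // w * w = 1} :=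
  ⟨dd cs i j k * (t : W) * (dd cs i j k)⁻¹, by
    have h1 : dd cs i j k * (t : W) * (dd cs i j k)⁻¹ * (dd cs i j k * (t : W) * (dd cs i j k)⁻¹)
        = dd cs i j k * ((t : W) * (t : W)) * (dd cs i j k)⁻¹ := by group
    rw [h1, t.2, mul_one, mul_inv_cancel]⟩

theorem tau_zero (i j : B) (t : {w : W // w * w = 1}) : tau cs i j 0 t = t := by
  apply Subtype.ext
  show dd cs i j 0 * (t : W) * (dd cs i j 0)⁻¹ = t
  rw [dd_zero]
  group

theorem tau_succ (i j : B) (k : ℕ) (t : {w : W // w * w = 1}) :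
    sigma cs (xx i j k) (tau cs i j k t) = tau cs i j (k + 1) t := by
  apply Subtype.ext
  show s (xx i j k) * (dd cs i j k * (t : W) * (dd cs i j k)⁻¹) * s (xx i j k) = _
  show _ = dd cs i j (k + 1) * (t : W) * (dd cs i j (k + 1))⁻¹
  rw [dd_succ, mul_inv_rev, cs.inv_simple]
  group

theorem end_walk (i j : B) (p : ℕ) (t : {w : W // w * w = 1}) :
    ((fEnd cs i * fEnd cs j) ^ p) (Finsupp.single t 1)
      = (∏ l ∈ Finset.range (2 * p), epsQ cs (xx i j l) (tau cs i j l t))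
          • Finsupp.single (tau cs i j (2 * p) t) 1 := by
  induction p with
  | zero => simp [tau_zero]
  | succ p ih =>
    have hx0 : xx i j (2 * p) = j := by simp [xx, even_two_mul]
    have hx1 : xx i j (2 * p + 1) = i := by
      have : ¬ Even (2 * p + 1) := by simp [Nat.even_add_one, even_two_mul]
      simp [xx, this]
    have key : ((fEnd cs i * fEnd cs j) ^ (p + 1)) (Finsupp.single t 1)
        = fEnd cs i (fEnd cs j (((fEnd cs i * fEnd cs j) ^ p) (Finsupp.single t 1))) := by
      rw [pow_succ', Module.End.mul_apply, Module.End.mul_apply]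
    rw [key, ih, map_smul, fEnd_single, map_smul, map_smul, fEnd_single]
    have h2p : 2 * (p + 1) = 2 * p + 1 + 1 := by ring
    rw [h2p, Finset.prod_range_succ, Finset.prod_range_succ]
    have e1 := tau_succ cs i j (2 * p) t
    rw [hx0] at e1
    have e2 := tau_succ cs i j (2 * p + 1) t
    rw [hx1] at e2
    rw [e1, e2, hx0, hx1, smul_smul, smul_smul]
    try congr 1
    try ring

theorem fEnd_liftable : M.IsLiftable (fun b => fEnd cs b) := by
  intro i j
  apply Finsupp.lhom_ext
  intro t q
  have hq : (Finsupp.single t q : {w : W // w * w = 1} →₀ ℚ) = q • Finsupp.single t 1 := by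
    rw [Finsupp.smul_single, smul_eq_mul, mul_one]
  rw [hq, map_smul, map_smul]
  dsimp only
  rw [Module.End.one_apply, end_walk]
  have htau : tau cs i j (2 * M i j) t = t := by
    apply Subtype.ext
    show dd cs i j (2 * M i j) * (t : W) * (dd cs i j (2 * M i j))⁻¹ = t
    rw [dd_two_M]
    group
  have hprod : (∏ l ∈ Finset.range (2 * M i j), epsQ cs (xx i j l) (tau cs i j l t)) = 1 := by
    rw [show 2 * M i j = M i j + M i j by ring, Finset.prod_range_add]
    have heq : ∀ l, epsQ cs (xx i j (M i j + l)) (tau cs i j (M i j + l) t)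
        = epsQ cs (xx i j l) (tau cs i j l t) := by
      intro l
      set u : W := dd cs i j l * (t : W) * (dd cs i j l)⁻¹ with hu_def
      have hu2 : u * u = 1 := (tau cs i j l t).2
      have hval : ((tau cs i j (M i j + l) t : {w : W // w * w = 1}) : W)
          = cc cs i j * u * cc cs i j := by
        show dd cs i j (M i j + l) * (t : W) * (dd cs i j (M i j + l))⁻¹ = _
        rw [dd_add, mul_inv_rev, cc_inv, hu_def]
        group
      have hS : s (xx i j (M i j + l)) = cc cs i j * s (xx i j l) * cc cs i j := by
        rw [Nat.add_comm]
        exact (cc_conj cs i j l).symm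
      unfold epsQ
      have hcomm_iff : (s (xx i j (M i j + l)) * ((tau cs i j (M i j + l) t : {w : W // w * w = 1}) : W)
            = ((tau cs i j (M i j + l) t : {w : W // w * w = 1}) : W) * s (xx i j (M i j + l)))
          ↔ (s (xx i j l) * u = u * s (xx i j l)) := by
        rw [hval, hS]
        constructor
        · intro h
          have h2 : cc cs i j * (s (xx i j l) * u) * cc cs i j
              = cc cs i j * (u * s (xx i j l)) * cc cs i j := by
            have lhs : cc cs i j * s (xx i j l) * cc cs i j * (cc cs i j * u * cc cs i j)
                = cc cs i j * (s (xx i j l) * u) * cc cs i j := by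
              have : cc cs i j * s (xx i j l) * (cc cs i j * cc cs i j) * u * cc cs i j
                  = cc cs i j * (s (xx i j l) * u) * cc cs i j := by
                rw [cc_sq, mul_one]; group
              rw [← this]; group
            have rhs : cc cs i j * u * cc cs i j * (cc cs i j * s (xx i j l) * cc cs i j)
                = cc cs i j * (u * s (xx i j l)) * cc cs i j := by
              have : cc cs i j * u * (cc cs i j * cc cs i j) * s (xx i j l) * cc cs i j
                  = cc cs i j * (u * s (xx i j l)) * cc cs i j := by
                rw [cc_sq, mul_one]; group
              rw [← this]; group
            rw [← lhs, ← rhs, h]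
          exact (conj_eq_conj_iff _ _ _).mp h2
        · intro h
          have h2 : cc cs i j * (s (xx i j l) * u) * cc cs i j
              = cc cs i j * (u * s (xx i j l)) * cc cs i j := by rw [h]
          calc cc cs i j * s (xx i j l) * cc cs i j * (cc cs i j * u * cc cs i j)
              = cc cs i j * s (xx i j l) * (cc cs i j * cc cs i j) * u * cc cs i j := by group
            _ = cc cs i j * (s (xx i j l) * u) * cc cs i j := by rw [cc_sq, mul_one]; group
            _ = cc cs i j * (u * s (xx i j l)) * cc cs i j := h2
            _ = cc cs i j * u * (cc cs i j * cc cs i j) * s (xx i j l) * cc cs i j := by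
                  rw [cc_sq, mul_one]; group
            _ = cc cs i j * u * cc cs i j * (cc cs i j * s (xx i j l) * cc cs i j) := by group
      by_cases hcomm : s (xx i j l) * u = u * s (xx i j l)
      · have hcomm' := hcomm_iff.mpr hcomm
        have hlen_iff : (ℓ (((tau cs i j (M i j + l) t : {w : W // w * w = 1}) : W)
              * s (xx i j (M i j + l)))
            < ℓ ((tau cs i j (M i j + l) t : {w : W // w * w = 1}) : W))
            ↔ (ℓ (u * s (xx i j l)) < ℓ u) := by
          rw [← eta_neg_iff, ← eta_neg_iff]
          have hA : eta cs ((tau cs i j (M i j + l) t : {w : W // w * w = 1}) : W)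
              (s (xx i j (M i j + l))) = eta cs u (s (xx i j l)) := by
            rw [hval]
            exact etaA cs (cc cs i j) u (s (xx i j l)) (s (xx i j (M i j + l)))
              (cc_sq cs i j) hu2 hcomm.symm hS
          rw [hA]
        rw [if_congr (and_congr hcomm_iff hlen_iff) rfl rfl]
        simp only [show ((tau cs i j l t : {w : W // w * w = 1}) : W) = u from rfl]
      · have hcomm' : ¬ (s (xx i j (M i j + l)) * ((tau cs i j (M i j + l) t : {w : W // w * w = 1}) : W)
            = ((tau cs i j (M i j + l) t : {w : W // w * w = 1}) : W) * s (xx i j (M i j + l))) :=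
          fun h => hcomm (hcomm_iff.mp h)
        rw [if_neg (fun h => hcomm' h.1), if_neg (fun h => hcomm h.1)]
    rw [Finset.prod_congr rfl (fun l _ => heq l), ← Finset.prod_mul_distrib]
    have hsq : ∀ l, epsQ cs (xx i j l) (tau cs i j l t) * epsQ cs (xx i j l) (tau cs i j l t)
        = 1 := by
      intro l
      unfold epsQ
      split <;> norm_num
    rw [Finset.prod_congr rfl (fun l _ => hsq l), Finset.prod_const_one]
  rw [htau, hprod, one_smul]

end Main

end InvolRepAux


/-- Let `(W,S)` be a finite Coxeter group and let `V` be the `ℚ`-vector space with basis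
`{a_w : w ∈ W, w² = 1}`.  Then the assignments `R(s)·a_w = −a_w` if `sw = ws` and
`l(ws) < l(w)`, and `R(s)·a_w = a_{sws}` otherwise (for `s ∈ S`), extend to a
well-defined linear representation `R` of `W` on `V`. -/
theorem involution_representation_exists
    {B W : Type*} [Group W] [Finite W] [DecidableEq W] {M : CoxeterMatrix B} (cs : CoxeterSystem M W) :
    ∃ R : W →* Module.End ℚ ({w : W // w * w = 1} →₀ ℚ),
      ∀ i : B, ∀ t u : {w : W // w * w = 1},
        (u : W) = cs.simple i * (t : W) * cs.simple i →
          R (cs.simple i) (Finsupp.single t 1) =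
            if cs.simple i * (t : W) = (t : W) * cs.simple i ∧
                cs.length ((t : W) * cs.simple i) < cs.length (t : W) then
              -(Finsupp.single t 1 : {w : W // w * w = 1} →₀ ℚ)
            else
              Finsupp.single u 1 := by
  refine ⟨cs.lift ⟨fun b => InvolRepAux.fEnd cs b, InvolRepAux.fEnd_liftable cs⟩, ?_⟩
  intro i t u hu
  rw [cs.lift_apply_simple]
  rw [InvolRepAux.fEnd_single]
  have hσ : InvolRepAux.sigma cs i t = u := Subtype.ext hu.symm
  rw [hσ]
  unfold InvolRepAux.epsQ
  split_ifs with h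
  · have hut : u = t := by
      apply Subtype.ext
      rw [hu, h.1, mul_assoc, cs.simple_mul_simple_self, mul_one]
    rw [hut]
    rw [neg_smul, one_smul]
  · rw [one_smul]
end

section
/- In the symmetric group S_n, the centralizer of the longest element w₀ (the permutation i ↦ n+1−i) contains a Sylow 2-subgroup of S_n. -/
open Equiv

namespace RevCent

/-- Core function on ℕ: acts on the first half via `p` with orientation `e`,
and equivariantly on the second half; fixes the middle. -/
def fN (n : ℕ) (p : ℕ → ℕ) (e : ℕ → Bool) (i : ℕ) : ℕ :=
  if i < n/2 then (if e i then p i else n - 1 - p i)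
  else if n - 1 - i < n/2 then
    (if e (n-1-i) then n - 1 - p (n-1-i) else p (n-1-i))
  else i

variable {n : ℕ} {p p' : ℕ → ℕ} {e e' : ℕ → Bool}

lemma fN_lt (hp : ∀ m, m < n/2 → p m < n/2) {i : ℕ} (hi : i < n) :
    fN n p e i < n := by
  unfold fN
  split_ifs with h1 h2 h3 h4
  · have := hp i h1; omega
  · omega
  · omega
  · have := hp _ h3; omega
  · omega

lemma fN_fN (hp : ∀ m, m < n/2 → p m < n/2)
    (hpp : ∀ m, m < n/2 → p' (p m) = m)
    (hee : ∀ m, m < n/2 → e' (p m) = e m)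
    {i : ℕ} (hi : i < n) : fN n p' e' (fN n p e i) = i := by
  by_cases h1 : i < n/2
  · have hpi := hp i h1
    cases he : e i with
    | true =>
      have hin : fN n p e i = p i := by simp [fN, h1, he]
      rw [hin, fN, if_pos hpi, hee i h1, he, if_pos rfl, hpp i h1]
    | false =>
      have hin : fN n p e i = n - 1 - p i := by simp [fN, h1, he]
      have hne : ¬ (n - 1 - p i < n/2) := by omega
      have hh : n - 1 - (n - 1 - p i) = p i := by omega
      rw [hin, fN, if_neg hne, hh, if_pos hpi, hee i h1, he]
      simp [hpp i h1]
  · by_cases h2 : n - 1 - i < n/2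
    · have hpi := hp _ h2
      cases he : e (n - 1 - i) with
      | true =>
        have hin : fN n p e i = n - 1 - p (n - 1 - i) := by simp [fN, h1, h2, he]
        have hne : ¬ (n - 1 - p (n-1-i) < n/2) := by omega
        have hh : n - 1 - (n - 1 - p (n-1-i)) = p (n-1-i) := by omega
        rw [hin, fN, if_neg hne, hh, if_pos hpi, hee _ h2, he, if_pos rfl, hpp _ h2]
        omega
      | false =>
        have hin : fN n p e i = p (n - 1 - i) := by simp [fN, h1, h2, he]
        rw [hin, fN, if_pos hpi, hee _ h2, he]
        simp only [Bool.false_eq_true, if_false, hpp _ h2]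
        omega
    · have hin : fN n p e i = i := by simp [fN, h1, h2]
      rw [hin, fN, if_neg h1, if_neg h2]

lemma fN_rev (hp : ∀ m, m < n/2 → p m < n/2) {i : ℕ} (hi : i < n) :
    fN n p e (n - 1 - i) = n - 1 - fN n p e i := by
  by_cases h1 : i < n/2
  · have hpi := hp i h1
    have hne : ¬ (n - 1 - i < n/2) := by omega
    have hh : n - 1 - (n - 1 - i) = i := by omega
    rw [fN, if_neg hne, hh, if_pos h1]
    rw [fN, if_pos h1]
    cases he : e i <;> simp <;> omega
  · by_cases h2 : n - 1 - i < n/2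
    · have hpi := hp _ h2
      rw [fN, if_pos h2]
      rw [fN, if_neg h1, if_pos h2]
      cases he : e (n - 1 - i) <;> simp <;> omega
    · have hh : n - 1 - (n - 1 - i) = i := by omega
      rw [fN, hh, if_neg h1, if_neg h2, fN, if_neg h1, if_neg h2]

end RevCent

namespace RevCent

variable {n : ℕ}

/-- totalization of a permutation of the half to ℕ -/
def pOf (π : Perm (Fin (n/2))) (m : ℕ) : ℕ :=
  if h : m < n/2 then (π ⟨m, h⟩).val else m

/-- totalization of a sign function to ℕ -/
def eOf (ε : Fin (n/2) → Bool) (m : ℕ) : Bool :=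
  if h : m < n/2 then ε ⟨m, h⟩ else false

lemma pOf_lt (π : Perm (Fin (n/2))) : ∀ m, m < n/2 → pOf π m < n/2 := by
  intro m hm; rw [pOf, dif_pos hm]; exact (π _).isLt

lemma pOf_pOf (π : Perm (Fin (n/2))) : ∀ m, m < n/2 → pOf π⁻¹ (pOf π m) = m := by
  intro m hm
  simp [pOf, hm]

lemma eOf_pOf (π : Perm (Fin (n/2))) (ε : Fin (n/2) → Bool) :
    ∀ m, m < n/2 → eOf ε (pOf π m) = eOf (fun j => ε (π j)) m := by
  intro m hm
  simp [pOf, eOf, hm]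

/-- The permutation of `Fin n` associated to `(π, ε)`. -/
def toC (π : Perm (Fin (n/2))) (ε : Fin (n/2) → Bool) : Perm (Fin n) where
  toFun i := ⟨fN n (pOf π) (eOf ε) i.val, fN_lt (pOf_lt π) i.isLt⟩
  invFun i := ⟨fN n (pOf π⁻¹) (eOf fun j => ε (π⁻¹ j)) i.val, fN_lt (pOf_lt π⁻¹) i.isLt⟩
  left_inv i := Fin.ext <| by
    refine fN_fN (pOf_lt π) (pOf_pOf π) ?_ i.isLt
    intro m hm
    rw [eOf_pOf π _ m hm]
    simp [eOf, hm]
  right_inv i := Fin.ext <| by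
    refine fN_fN (pOf_lt π⁻¹) ?_ ?_ i.isLt
    · have := pOf_pOf π⁻¹
      simpa using this
    · intro m hm
      have := eOf_pOf π⁻¹ ε m hm
      simpa using this

lemma toC_val (π : Perm (Fin (n/2))) (ε : Fin (n/2) → Bool) (i : Fin n) :
    (toC π ε i).val = fN n (pOf π) (eOf ε) i.val := rfl

lemma toC_rev (π : Perm (Fin (n/2))) (ε : Fin (n/2) → Bool) (i : Fin n) :
    toC π ε (Fin.rev i) = Fin.rev (toC π ε i) := by
  apply Fin.ext
  rw [toC_val, Fin.val_rev, Fin.val_rev, toC_val]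
  have h1 : n - (i.val + 1) = n - 1 - i.val := by omega
  have h2 := fN_lt (p := pOf π) (e := eOf ε) (pOf_lt π) i.isLt
  rw [h1, fN_rev (pOf_lt π) i.isLt]
  omega

lemma toC_mem (π : Perm (Fin (n/2))) (ε : Fin (n/2) → Bool) :
    toC π ε ∈ Subgroup.centralizer {(Fin.revPerm : Perm (Fin n))} := by
  rw [Subgroup.mem_centralizer_singleton_iff]
  ext i
  simp only [Perm.mul_apply, Fin.revPerm_apply]
  exact congrArg Fin.val (toC_rev π ε i)

lemma toC_injective :
    Function.Injective fun pe : Perm (Fin (n/2)) × (Fin (n/2) → Bool) => toC pe.1 pe.2 := by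
  rintro ⟨π, ε⟩ ⟨π', ε'⟩ h
  simp only at h
  have key : ∀ j : Fin (n/2), π j = π' j ∧ ε j = ε' j := by
    intro j
    have hj := j.isLt
    have hjn : (j : ℕ) < n := by omega
    have hv : (toC π ε ⟨j.val, hjn⟩).val = (toC π' ε' ⟨j.val, hjn⟩).val := by rw [h]
    rw [toC_val, toC_val] at hv
    have hπ := (π j).isLt
    have hπ' := (π' j).isLt
    unfold fN at hv
    rw [if_pos hj, if_pos hj] at hv
    have hp : pOf π j.val = (π j).val := by rw [pOf, dif_pos hj, Fin.eta]
    have hp' : pOf π' j.val = (π' j).val := by rw [pOf, dif_pos hj, Fin.eta]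
    have he : eOf ε j.val = ε j := by rw [eOf, dif_pos hj, Fin.eta]
    have he' : eOf ε' j.val = ε' j := by rw [eOf, dif_pos hj, Fin.eta]
    rw [hp, hp', he, he'] at hv
    cases h1 : ε j <;> cases h2 : ε' j <;> rw [h1, h2] at hv <;> simp at hv <;>
      [exact ⟨Fin.ext (by omega), rfl⟩; exact absurd hv (by omega);
       exact absurd hv (by omega); exact ⟨Fin.ext (by omega), rfl⟩]
  exact Prod.ext (Equiv.ext fun j => (key j).1) (funext fun j => (key j).2)

end RevCent

namespace RevCent

variable {n : ℕ}

section Surj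

variable {σ : Perm (Fin n)} (hc : ∀ i : Fin n, Fin.rev (σ i) = σ (Fin.rev i))

/-- totalization of a centralizing permutation to a half-permutation on ℕ -/
def pS (σ : Perm (Fin n)) (m : ℕ) : ℕ :=
  if h : m < n then
    (if (σ ⟨m, h⟩).val < n/2 then (σ ⟨m, h⟩).val else n - 1 - (σ ⟨m, h⟩).val)
  else m

def eS (σ : Perm (Fin n)) (m : ℕ) : Bool :=
  if h : m < n then decide ((σ ⟨m, h⟩).val < n/2) else false

include hc

lemma hc_val : ∀ i : Fin n, (σ (Fin.rev i)).val = n - 1 - (σ i).val := by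
  intro i
  rw [← hc i, Fin.val_rev]
  have := (σ i).isLt
  omega

lemma no_middle : ∀ m (hm : m < n/2),
    (σ ⟨m, by omega⟩).val < n/2 ∨ n - 1 - (σ ⟨m, by omega⟩).val < n/2 := by
  intro m hm
  by_contra hcon
  push_neg at hcon
  obtain ⟨h1, h2⟩ := hcon
  set v : Fin n := ⟨m, by omega⟩ with hv
  have ha := (σ v).isLt
  have hmid : (σ v).val = n - 1 - (σ v).val := by omega
  have hfix : Fin.rev (σ v) = σ v := Fin.ext (by rw [Fin.val_rev]; omega)
  rw [hc v] at hfix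
  have := σ.injective hfix
  have : (Fin.rev v).val = v.val := congrArg Fin.val this
  rw [Fin.val_rev] at this
  simp only [hv] at this
  omega

lemma pS_lt : ∀ m, m < n/2 → pS σ m < n/2 := by
  intro m hm
  have hmn : m < n := by omega
  rcases no_middle hc m hm with h | h <;> rw [pS, dif_pos hmn]
  · rw [if_pos h]; exact h
  · rcases Nat.lt_or_ge (σ ⟨m, hmn⟩).val (n/2) with h' | h'
    · rw [if_pos h']; exact h'
    · rw [if_neg (by omega)]; exact h

lemma hc_inv : ∀ i : Fin n, Fin.rev (σ⁻¹ i) = σ⁻¹ (Fin.rev i) := by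
  intro i
  have := hc (σ⁻¹ i)
  rw [show ∀ x, σ (σ⁻¹ x) = x from σ.apply_symm_apply] at this
  rw [this, show ∀ x, σ⁻¹ (σ x) = x from σ.symm_apply_apply]

lemma pS_pS : ∀ m, m < n/2 → pS σ⁻¹ (pS σ m) = m := by
  intro m hm
  have hmn : m < n := by omega
  set v : Fin n := ⟨m, hmn⟩ with hv
  have ha := (σ v).isLt
  by_cases h : (σ v).val < n/2
  · have e1 : pS σ m = (σ v).val := by rw [pS, dif_pos hmn, if_pos h]
    rw [e1, pS, dif_pos ha, Fin.eta, show ∀ x, σ⁻¹ (σ x) = x from σ.symm_apply_apply]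
    have : (v : ℕ) < n/2 := hm
    rw [if_pos this]
  · have e1 : pS σ m = n - 1 - (σ v).val := by rw [pS, dif_pos hmn, if_neg h]
    have hb : n - 1 - (σ v).val < n := by omega
    rw [e1, pS, dif_pos hb]
    have e2 : (⟨n - 1 - (σ v).val, hb⟩ : Fin n) = Fin.rev (σ v) :=
      Fin.ext (show n - 1 - (σ v).val = (Fin.rev (σ v)).val by rw [Fin.val_rev]; omega)
    rw [e2, ← hc_inv hc (σ v), show ∀ x, σ⁻¹ (σ x) = x from σ.symm_apply_apply]
    have e3 : (Fin.rev v).val = n - 1 - m := by rw [Fin.val_rev]; simp [hv]; omega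
    rw [if_neg (by rw [e3]; omega), e3]
    omega

lemma fN_pS : ∀ i : Fin n, fN n (pS σ) (eS σ) i.val = (σ i).val := by
  intro i
  have hin := i.isLt
  have ha := (σ i).isLt
  by_cases h1 : i.val < n/2
  · rw [fN, if_pos h1]
    have he : eS σ i.val = decide ((σ i).val < n/2) := by
      rw [eS, dif_pos hin, Fin.eta]
    have hp : pS σ i.val =
        if (σ i).val < n/2 then (σ i).val else n - 1 - (σ i).val := by
      rw [pS, dif_pos hin, Fin.eta]
    by_cases h : (σ i).val < n/2
    · rw [he, hp, decide_eq_true h, if_pos rfl, if_pos h]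
    · rw [he, hp, decide_eq_false h, if_neg h]
      simp only [Bool.false_eq_true, if_false]
      omega
  · by_cases h2 : n - 1 - i.val < n/2
    · rw [fN, if_neg h1, if_pos h2]
      have hwn : n - 1 - i.val < n := by omega
      set w : Fin n := ⟨n - 1 - i.val, hwn⟩ with hw
      have hwrev : w = Fin.rev i := Fin.ext (by rw [Fin.val_rev]; simp [hw]; omega)
      have hb : (σ w).val = n - 1 - (σ i).val := by rw [hwrev, hc_val hc]
      have hbb := (σ w).isLt
      have he : eS σ (n - 1 - i.val) = decide ((σ w).val < n/2) := by
        rw [eS, dif_pos hwn]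
      have hp : pS σ (n - 1 - i.val) =
          if (σ w).val < n/2 then (σ w).val else n - 1 - (σ w).val := by
        rw [pS, dif_pos hwn]
      by_cases h : (σ w).val < n/2
      · rw [he, hp, decide_eq_true h, if_pos rfl, if_pos h]
        omega
      · rw [he, hp, decide_eq_false h, if_neg h]
        simp only [Bool.false_eq_true, if_false]
        omega
    · rw [fN, if_neg h1, if_neg h2]
      have hrev : Fin.rev i = i := Fin.ext (by rw [Fin.val_rev]; omega)
      have := hc_val hc i
      rw [hrev] at this
      omega

end Surj

end RevCent

namespace RevCent

variable {n : ℕ}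

lemma fN_congr {p p' : ℕ → ℕ} {e e' : ℕ → Bool}
    (hp : ∀ m, m < n/2 → p m = p' m) (he : ∀ m, m < n/2 → e m = e' m) (i : ℕ) :
    fN n p e i = fN n p' e' i := by
  unfold fN
  by_cases h1 : i < n/2
  · rw [if_pos h1, if_pos h1, hp i h1, he i h1]
  · rw [if_neg h1, if_neg h1]
    by_cases h2 : n - 1 - i < n/2
    · rw [if_pos h2, if_pos h2, hp _ h2, he _ h2]
    · rw [if_neg h2, if_neg h2]

/-- the half-permutation extracted from a centralizing permutation -/
def piS {σ : Perm (Fin n)} (hc : ∀ i : Fin n, Fin.rev (σ i) = σ (Fin.rev i)) :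
    Perm (Fin (n/2)) where
  toFun j := ⟨pS σ j.val, pS_lt hc j.val j.isLt⟩
  invFun j := ⟨pS σ⁻¹ j.val, pS_lt (hc_inv hc) j.val j.isLt⟩
  left_inv j := Fin.ext (pS_pS hc j.val j.isLt)
  right_inv j := Fin.ext (by have := pS_pS (hc_inv hc) j.val j.isLt; simpa using this)

lemma toC_piS {σ : Perm (Fin n)} (hc : ∀ i : Fin n, Fin.rev (σ i) = σ (Fin.rev i)) :
    toC (piS hc) (fun j => eS σ j.val) = σ := by
  apply Equiv.ext
  intro i
  apply Fin.ext
  rw [toC_val]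
  rw [fN_congr (p' := pS σ) (e' := eS σ)
    (fun m hm => by rw [pOf, dif_pos hm]; rfl)
    (fun m hm => by rw [eOf, dif_pos hm]) i.val]
  exact fN_pS hc i

lemma card_cent (n : ℕ) :
    Nat.card (Subgroup.centralizer {(Fin.revPerm : Perm (Fin n))}) =
      2 ^ (n/2) * Nat.factorial (n/2) := by
  classical
  have hbij : Function.Bijective
      (fun pe : Perm (Fin (n/2)) × (Fin (n/2) → Bool) =>
        (⟨toC pe.1 pe.2, toC_mem pe.1 pe.2⟩ :
          ↥(Subgroup.centralizer {(Fin.revPerm : Perm (Fin n))}))) := by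
    constructor
    · intro a b hab
      exact toC_injective (congrArg Subtype.val hab)
    · rintro ⟨σ, hmem⟩
      have hc : ∀ i : Fin n, Fin.rev (σ i) = σ (Fin.rev i) := by
        rw [Subgroup.mem_centralizer_singleton_iff] at hmem
        intro i
        have := Equiv.ext_iff.mp hmem i
        simpa using this.symm
      exact ⟨⟨piS hc, fun j => eS σ j.val⟩, Subtype.ext (toC_piS hc)⟩
  have hcard := Nat.card_eq_of_bijective _ hbij
  rw [← hcard, Nat.card_prod]
  simp [Nat.card_eq_fintype_card, Fintype.card_perm, mul_comm]

end RevCent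

namespace RevCent

open Nat

lemma emult_factorial (n : ℕ) :
    emultiplicity 2 (n !) = emultiplicity 2 ((n/2)!) + (n/2 : ℕ) := by
  rcases Nat.even_or_odd n with he | ho
  · have h2 : n = 2 * (n/2) := by obtain ⟨k, hk⟩ := he; omega
    calc emultiplicity 2 (n !) = emultiplicity 2 ((2 * (n/2))!) := by rw [← h2]
      _ = _ := Nat.Prime.emultiplicity_factorial_mul Nat.prime_two
  · have h2 : n - 1 = 2 * (n/2) := by rcases ho with ⟨k, hk⟩; omega
    have hn1 : 1 ≤ n := by rcases ho with ⟨k, hk⟩; omega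
    have hfac : n ! = n * ((n-1)!) := by
      conv_lhs => rw [show n = (n-1) + 1 by omega]
      rw [Nat.factorial_succ]
      congr 1
      omega
    rw [hfac, emultiplicity_mul Nat.prime_two.prime]
    have hodd : ¬ (2 ∣ n) := by rcases ho with ⟨k, hk⟩; omega
    rw [emultiplicity_eq_zero.mpr hodd, zero_add, h2,
      Nat.Prime.emultiplicity_factorial_mul Nat.prime_two]

lemma not_two_dvd_of_eq_factorial {n t : ℕ}
    (h : 2 ^ (n/2) * Nat.factorial (n/2) * t = n !) : ¬ 2 ∣ t := by
  have hfin : emultiplicity 2 ((n/2)!) ≠ ⊤ := by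
    rw [Ne, emultiplicity_eq_top, Classical.not_not, Nat.finiteMultiplicity_iff]
    exact ⟨by norm_num, Nat.factorial_pos _⟩
  have hmul : emultiplicity 2 (2 ^ (n/2) * Nat.factorial (n/2) * t) =
      ((n/2 : ℕ) + emultiplicity 2 ((n/2)!)) + emultiplicity 2 t := by
    rw [emultiplicity_mul Nat.prime_two.prime, emultiplicity_mul Nat.prime_two.prime,
      emultiplicity_pow_self_of_prime Nat.prime_two.prime]
  rw [h, emult_factorial n] at hmul
  have hne : ((n/2 : ℕ) + emultiplicity 2 ((n/2)!) : ℕ∞) ≠ ⊤ := by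
    intro hcon
    rw [ENat.add_eq_top] at hcon
    rcases hcon with hc | hc
    · exact (WithTop.natCast_ne_top _) hc
    · exact hfin hc
  have hz : emultiplicity 2 t = 0 := by
    have : ((n/2 : ℕ) + emultiplicity 2 ((n/2)!) : ℕ∞) + emultiplicity 2 t =
        ((n/2 : ℕ) + emultiplicity 2 ((n/2)!) : ℕ∞) + 0 := by
      rw [add_zero]
      rw [← hmul]
      rw [add_comm (emultiplicity 2 ((n/2)!)) ((n/2 : ℕ) : ℕ∞)]
    exact WithTop.add_left_cancel hne this
  exact emultiplicity_eq_zero.mp hz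

/-- If a subgroup has index not divisible by `p`, it contains a Sylow `p`-subgroup. -/
lemma exists_sylow_le_of_not_dvd {G : Type*} [Group G] [Finite G] {p : ℕ} [Fact p.Prime]
    {H : Subgroup G} (h : ¬ p ∣ H.index) : ∃ P : Sylow p G, (P : Subgroup G) ≤ H := by
  obtain ⟨Q⟩ : Nonempty (Sylow p H) := inferInstance
  have hQcard : Nat.card Q = p ^ (Nat.card H).factorization p := Q.card_eq_multiplicity
  have hHG : (Nat.card H).factorization p = (Nat.card G).factorization p := by
    have hmi : Nat.card H * H.index = Nat.card G := H.card_mul_index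
    have hH0 : Nat.card H ≠ 0 := Nat.card_pos.ne'
    have hi0 : H.index ≠ 0 := by
      intro h0
      have := hmi
      rw [h0, mul_zero] at this
      exact Nat.card_pos.ne' this.symm
    rw [← hmi, Nat.factorization_mul hH0 hi0]
    simp [Nat.factorization_eq_zero_of_not_dvd h]
  have hmapcard : Nat.card ((Q : Subgroup H).map H.subtype) =
      p ^ (Nat.card G).factorization p := by
    rw [← hHG, ← hQcard]
    exact (Nat.card_congr ((Q : Subgroup H).equivMapOfInjective H.subtype
      H.subtype_injective).toEquiv).symm
  refine ⟨Sylow.ofCard _ hmapcard, ?_⟩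
  rw [Sylow.coe_ofCard]
  exact Subgroup.map_subtype_le _

end RevCent

/-- In the symmetric group `Sₙ`, the centralizer of the longest element `w₀`
(the order-reversing permutation `i ↦ n+1−i`, which on `Fin n` is `Fin.rev`)
contains a Sylow 2-subgroup of `Sₙ`. -/
theorem centralizer_longest_element_contains_sylow_two (n : ℕ) :
    ∃ P : Sylow 2 (Equiv.Perm (Fin n)),
      (P : Subgroup (Equiv.Perm (Fin n))) ≤
        Subgroup.centralizer {(Fin.revPerm : Equiv.Perm (Fin n))} := by
  apply RevCent.exists_sylow_le_of_not_dvd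
  set H := Subgroup.centralizer {(Fin.revPerm : Equiv.Perm (Fin n))} with hH
  have hmi : Nat.card H * H.index = Nat.card (Equiv.Perm (Fin n)) := H.card_mul_index
  rw [hH, RevCent.card_cent n] at hmi
  have hG : Nat.card (Equiv.Perm (Fin n)) = Nat.factorial n := by
    rw [Nat.card_eq_fintype_card, Fintype.card_perm, Fintype.card_fin]
  rw [hG] at hmi
  exact RevCent.not_two_dvd_of_eq_factorial hmi
end
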